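/- Let Ω be the 2D flat torus, q ≥ 2, K(r) = r + r^{q+1}/(q+1), and θ₁, θ₂ ∈ L^{q+2}(Ω) nonnegative with θ := θ₁ - θ₂. Then ⟨K(θ₁) - K(θ₂), θ - θ_Ω⟩ ≥ (1/2)‖θ - θ_Ω‖_{L²}² - c θ_Ω², where θ_Ω = ∫_Ω θ is the spatial mean (|Ω| = 1), and c depends only on q and on bounds for ‖θᵢ‖_{L^p} for finite p. -/

import Mathlib

open MeasureTheory

noncomputable section

/-- The unit periodicity cell of the 2D flat torus. -/
def Qd : Set (ℝ × ℝ) := Set.Icc (0:ℝ) 1 ×ˢ Set.Icc (0:ℝ) 1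

/-- `Ω`-periodicity (period 1 in each variable). -/
def PerF {E : Type*} (v : ℝ × ℝ → E) : Prop :=
  ∀ x : ℝ × ℝ, v (x.1 + 1, x.2) = v x ∧ v (x.1, x.2 + 1) = v x

/-- Spatial mean over the torus (`|Ω| = 1`). -/
def meanQ (v : ℝ × ℝ → ℝ) : ℝ := ∫ x in Qd, v x

/-- Squared `L²` norm. -/
def l2sqQ (v : ℝ × ℝ → ℝ) : ℝ := ∫ x in Qd, (v x) ^ 2

/-- Squared `L²` norm of the gradient. -/
def gradsqQ (v : ℝ × ℝ → ℝ) : ℝ := ∫ x in Qd, ‖fderiv ℝ v x‖ ^ 2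

/-- Squared `H¹` norm. -/
def h1sqQ (v : ℝ × ℝ → ℝ) : ℝ := l2sqQ v + gradsqQ v

/-- Squared `H²` norm. -/
def h2sqQ (v : ℝ × ℝ → ℝ) : ℝ := h1sqQ v + ∫ x in Qd, ‖iteratedFDeriv ℝ 2 v x‖ ^ 2

/-- Laplacian on `ℝ²`. -/
def lapQ (v : ℝ × ℝ → ℝ) (x : ℝ × ℝ) : ℝ :=
  fderiv ℝ (fun y => fderiv ℝ v y (1, 0)) x (1, 0)
  + fderiv ℝ (fun y => fderiv ℝ v y (0, 1)) x (0, 1)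

/-- The temperature nonlinearity `K(r) = r + r^{q+1}/(q+1)`. -/
def Kfun (q r : ℝ) : ℝ := r + r ^ (q + 1) / (q + 1)

/-! Write `K(θ₁) - K(θ₂) = d + N` with `d = θ₁ - θ₂` and `N = (θ₁^{q+1} - θ₂^{q+1})/(q+1)`.
Monotonicity of `r ↦ r^{q+1}` gives `N d ≥ 0`, and the mean value theorem gives `|N| ≤ s |d|`
with `s = θ₁^q + θ₂^q`. Against `φ = d - m`, `m` the mean of `d`, Young's inequality on the
cross term `N m` yields pointwise `(d + N) φ ≥ φ²/2 + m φ - m² (s²/2 + s)`. Integrating, `m φ`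
has mean zero and `∫ (s²/2 + s)` is controlled by the `L^{2q}` and `L^q` bounds on `θᵢ`. -/

open Set

section Rpow

variable {p a b : ℝ}

lemma abs_rpow_sub_rpow_le_mul_max (hp : 1 ≤ p) (ha : 0 ≤ a) (hb : 0 ≤ b) :
    |a ^ p - b ^ p| ≤ p * max a b ^ (p - 1) * |a - b| := by
  have hderiv : ∀ x ∈ Icc 0 (max a b),
      HasDerivWithinAt (· ^ p) (p * x ^ (p - 1)) (Icc 0 (max a b)) x :=
    fun x _ => (Real.hasDerivAt_rpow_const (Or.inr hp)).hasDerivWithinAt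
  have hbound : ∀ x ∈ Icc 0 (max a b), ‖p * x ^ (p - 1)‖ ≤ p * max a b ^ (p - 1) := by
    rintro x ⟨hx0, hxM⟩
    rw [Real.norm_eq_abs, abs_of_nonneg (by positivity)]
    gcongr
  simpa only [Real.norm_eq_abs] using
    (convex_Icc 0 (max a b)).norm_image_sub_le_of_norm_hasDerivWithin_le hderiv hbound
      ⟨hb, le_max_right a b⟩ ⟨ha, le_max_left a b⟩

lemma abs_rpow_sub_rpow_le (hp : 1 ≤ p) (ha : 0 ≤ a) (hb : 0 ≤ b) :
    |a ^ p - b ^ p| ≤ p * (a ^ (p - 1) + b ^ (p - 1)) * |a - b| := by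
  have hmax : max a b ^ (p - 1) ≤ a ^ (p - 1) + b ^ (p - 1) := by
    rcases le_total a b with h | h
    · rw [max_eq_right h]; linarith [Real.rpow_nonneg ha (p - 1)]
    · rw [max_eq_left h]; linarith [Real.rpow_nonneg hb (p - 1)]
  calc |a ^ p - b ^ p| ≤ p * max a b ^ (p - 1) * |a - b| := abs_rpow_sub_rpow_le_mul_max hp ha hb
    _ ≤ p * (a ^ (p - 1) + b ^ (p - 1)) * |a - b| := by gcongr

lemma rpow_sub_rpow_mul_sub_nonneg (hp : 0 ≤ p) (ha : 0 ≤ a) (hb : 0 ≤ b) :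
    0 ≤ (a ^ p - b ^ p) * (a - b) :=
  ((Real.monotoneOn_rpow_Ici_of_exponent_nonneg hp).monovaryOn monotoneOn_id).sub_mul_sub_nonneg
    hb ha

end Rpow

lemma half_sq_add_mul_sub_le_add_mul {d N m s : ℝ} (hs : 0 ≤ s) (hNd : 0 ≤ N * d)
    (hN : |N| ≤ s * |d|) :
    (1 / 2) * (d - m) ^ 2 + m * (d - m) - m ^ 2 * (s ^ 2 / 2 + s) ≤ (d + N) * (d - m) := by
  have hNm : |N * m| ≤ |m| * s * |d - m| + m ^ 2 * s := by
    calc |N * m| = |N| * |m| := abs_mul N m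
      _ ≤ s * (|d - m| + |m|) * |m| := by
          gcongr
          exact hN.trans (by gcongr; simpa using abs_add_le (d - m) m)
      _ = |m| * s * |d - m| + m ^ 2 * s := by rw [← sq_abs m]; ring
  have hamgm : |m| * s * |d - m| ≤ (1 / 2) * (d - m) ^ 2 + m ^ 2 * s ^ 2 / 2 := by
    nlinarith [sq_nonneg (|d - m| - |m| * s), sq_abs (d - m), sq_abs m]
  have hexpand : (d + N) * (d - m) = (d - m) ^ 2 + m * (d - m) + N * d - N * m := by ring
  linarith [le_abs_self (N * m)]

section Kfun

variable {q : ℝ}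

lemma Kfun_sub_Kfun (hq : q + 1 ≠ 0) (a b : ℝ) :
    Kfun q a - Kfun q b = (a - b) + (a ^ (q + 1) - b ^ (q + 1)) / (q + 1) := by
  unfold Kfun
  field_simp
  ring

lemma Kfun_sub_Kfun_mul_ge (hq : 0 ≤ q) {a b : ℝ} (ha : 0 ≤ a) (hb : 0 ≤ b) (m : ℝ) :
    (1 / 2) * (a - b - m) ^ 2 + m * (a - b - m)
        - m ^ 2 * ((a ^ (2 * q) + b ^ (2 * q)) + (a ^ q + b ^ q)) ≤
      (Kfun q a - Kfun q b) * (a - b - m) := by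
  have hq1 : 0 < q + 1 := by linarith
  set s := a ^ q + b ^ q
  set N := (a ^ (q + 1) - b ^ (q + 1)) / (q + 1)
  have hs : 0 ≤ s := by positivity
  have hNd : 0 ≤ N * (a - b) := by
    rw [div_mul_eq_mul_div]
    exact div_nonneg (rpow_sub_rpow_mul_sub_nonneg hq1.le ha hb) hq1.le
  have hN : |N| ≤ s * |a - b| := by
    rw [abs_div, abs_of_pos hq1, div_le_iff₀ hq1]
    have := abs_rpow_sub_rpow_le (p := q + 1) (by linarith) ha hb
    rw [add_sub_cancel_right] at this
    linarith
  have hs2 : s ^ 2 / 2 ≤ a ^ (2 * q) + b ^ (2 * q) := by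
    rw [mul_comm, Real.rpow_mul ha, Real.rpow_mul hb]
    norm_cast
    nlinarith [sq_nonneg (a ^ q - b ^ q)]
  rw [Kfun_sub_Kfun hq1.ne']
  calc _ ≤ (1 / 2) * (a - b - m) ^ 2 + m * (a - b - m) - m ^ 2 * (s ^ 2 / 2 + s) := by gcongr
    _ ≤ _ := half_sq_add_mul_sub_le_add_mul hs hNd hN

end Kfun

lemma setIntegral_sub_setIntegral_eq_zero {α : Type*} [MeasurableSpace α] {μ : Measure α}
    {s : Set α} (hs : μ s = 1) (f : α → ℝ) :
    ∫ x in s, (f x - ∫ y in s, f y ∂μ) ∂μ = 0 := by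
  simpa [setAverage_eq, measureReal_def, hs] using
    setAverage_sub_setAverage (μ := μ) (s := s) (by simp [hs]) f

theorem setIntegral_Kfun_sub_Kfun_mul_ge {X : Type*} [TopologicalSpace X] [MeasurableSpace X]
    [T2Space X] [OpensMeasurableSpace X] {μ : Measure X} [IsFiniteMeasureOnCompacts μ] {s : Set X}
    {q m : ℝ} {f g : X → ℝ} (hq : 0 ≤ q) (hs : IsCompact s) (hμs : μ s = 1)
    (hf : Continuous f) (hg : Continuous g) (hf0 : ∀ x, 0 ≤ f x) (hg0 : ∀ x, 0 ≤ g x)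
    (hm : ∫ x in s, (f x - g x) ∂μ = m) :
    (1 / 2) * ∫ x in s, (f x - g x - m) ^ 2 ∂μ
        - m ^ 2 * ∫ x in s, ((f x ^ (2 * q) + g x ^ (2 * q)) + (f x ^ q + g x ^ q)) ∂μ ≤
      ∫ x in s, (Kfun q (f x) - Kfun q (g x)) * (f x - g x - m) ∂μ := by
  have hintegrable {F : X → ℝ} (hF : Continuous F) : IntegrableOn F s μ :=
    hF.continuousOn.integrableOn_compact hs
  have hpow {h : X → ℝ} (hh : Continuous h) {p : ℝ} (hp : 0 ≤ p) : Continuous (h · ^ p) :=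
    hh.rpow_const fun _ => Or.inr hp
  have hmean : ∫ x in s, (f x - g x - m) ∂μ = 0 := by
    rw [← hm]; exact setIntegral_sub_setIntegral_eq_zero hμs _
  have hφ : Continuous fun x => f x - g x - m := by fun_prop
  have hw : Continuous fun x => (f x ^ (2 * q) + g x ^ (2 * q)) + (f x ^ q + g x ^ q) :=
    ((hpow hf (by positivity)).add (hpow hg (by positivity))).add ((hpow hf hq).add (hpow hg hq))
  have hK : Continuous fun x => (Kfun q (f x) - Kfun q (g x)) * (f x - g x - m) := by
    unfold Kfun
    exact ((hf.add ((hpow hf (by positivity)).div_const _)).sub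
      (hg.add ((hpow hg (by positivity)).div_const _))).mul hφ
  have hsq : IntegrableOn (fun x => (1 / 2) * (f x - g x - m) ^ 2) s μ := hintegrable (by fun_prop)
  have hlin : IntegrableOn (fun x => m * (f x - g x - m)) s μ := hintegrable (by fun_prop)
  have hquad : IntegrableOn
      (fun x => (1 / 2) * (f x - g x - m) ^ 2 + m * (f x - g x - m)) s μ := hsq.add hlin
  calc _ = ∫ x in s, ((1 / 2) * (f x - g x - m) ^ 2 + m * (f x - g x - m)
          - m ^ 2 * ((f x ^ (2 * q) + g x ^ (2 * q)) + (f x ^ q + g x ^ q))) ∂μ := by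
        rw [integral_sub hquad ((hintegrable hw).const_mul _), integral_add hsq hlin,
          integral_const_mul, integral_const_mul, integral_const_mul, hmean]
        ring
    _ ≤ _ := setIntegral_mono (hintegrable (by fun_prop)) (hintegrable hK)
        fun x => Kfun_sub_Kfun_mul_ge hq (hf0 x) (hg0 x) m

lemma volume_Qd : volume Qd = 1 := by
  rw [Qd, Measure.volume_eq_prod, Measure.prod_prod, Real.volume_Icc]
  norm_num

lemma isCompact_Qd : IsCompact Qd := isCompact_Icc.prod isCompact_Icc

lemma setIntegral_Qd_rpow_add_rpow_le {q B : ℝ} {θ₁ θ₂ : ℝ × ℝ → ℝ} (hq : 1 ≤ q)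
    (hθ₁ : Continuous θ₁) (hθ₂ : Continuous θ₂)
    (hL₁ : ∀ p : ℝ, 1 ≤ p → (∫ x in Qd, θ₁ x ^ p) ≤ B ^ p)
    (hL₂ : ∀ p : ℝ, 1 ≤ p → (∫ x in Qd, θ₂ x ^ p) ≤ B ^ p) :
    ∫ x in Qd, ((θ₁ x ^ (2 * q) + θ₂ x ^ (2 * q)) + (θ₁ x ^ q + θ₂ x ^ q)) ≤
      2 * B ^ (2 * q) + 2 * B ^ q := by
  have hpow {θ : ℝ × ℝ → ℝ} (hθ : Continuous θ) {p : ℝ} (hp : 1 ≤ p) :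
      IntegrableOn (θ · ^ p) Qd :=
    (hθ.rpow_const fun _ => Or.inr (by linarith)).continuousOn.integrableOn_compact isCompact_Qd
  have h2q : 1 ≤ 2 * q := by linarith
  have hsum2q : IntegrableOn (fun x => θ₁ x ^ (2 * q) + θ₂ x ^ (2 * q)) Qd :=
    (hpow hθ₁ h2q).add (hpow hθ₂ h2q)
  have hsumq : IntegrableOn (fun x => θ₁ x ^ q + θ₂ x ^ q) Qd :=
    (hpow hθ₁ hq).add (hpow hθ₂ hq)
  rw [integral_add hsum2q hsumq, integral_add (hpow hθ₁ h2q) (hpow hθ₂ h2q),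
    integral_add (hpow hθ₁ hq) (hpow hθ₂ hq)]
  linarith [hL₁ (2 * q) h2q, hL₂ (2 * q) h2q, hL₁ q hq, hL₂ q hq]

theorem K_diff_coercive_general (q B : ℝ) (hq : 2 ≤ q) :
    ∃ c : ℝ, 0 < c ∧ ∀ θ₁ θ₂ : ℝ × ℝ → ℝ,
      Continuous θ₁ → Continuous θ₂ → PerF θ₁ → PerF θ₂ →
      (∀ x, 0 ≤ θ₁ x) → (∀ x, 0 ≤ θ₂ x) →
      (∀ p : ℝ, 1 ≤ p → (∫ x in Qd, θ₁ x ^ p) ≤ B ^ p) →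
      (∀ p : ℝ, 1 ≤ p → (∫ x in Qd, θ₂ x ^ p) ≤ B ^ p) →
      (∫ x in Qd, (Kfun q (θ₁ x) - Kfun q (θ₂ x)) *
          ((θ₁ x - θ₂ x) - meanQ (fun y => θ₁ y - θ₂ y))) ≥
        (1 / 2) * l2sqQ (fun x => (θ₁ x - θ₂ x) - meanQ (fun y => θ₁ y - θ₂ y)) -
          c * (meanQ (fun y => θ₁ y - θ₂ y)) ^ 2 := by
  set C := 2 * B ^ (2 * q) + 2 * B ^ q
  -- `B ^ p` is `Real.rpow`, which need not be positive for `B < 0`; `max 1` keeps `c` positive.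
  refine ⟨max 1 C, lt_max_of_lt_left one_pos, ?_⟩
  intro θ₁ θ₂ hθ₁ hθ₂ _ _ hθ₁0 hθ₂0 hL₁ hL₂
  set m := meanQ fun y => θ₁ y - θ₂ y
  have hcoercive := setIntegral_Kfun_sub_Kfun_mul_ge (q := q) (m := m) (by linarith)
    isCompact_Qd volume_Qd hθ₁ hθ₂ hθ₁0 hθ₂0 rfl
  have hweight := setIntegral_Qd_rpow_add_rpow_le (q := q) (by linarith) hθ₁ hθ₂ hL₁ hL₂
  have hm2 : m ^ 2 * C ≤ m ^ 2 * max 1 C := by gcongr; exact le_max_right 1 C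
  unfold l2sqQ
  linarith [mul_le_mul_of_nonneg_left hweight (sq_nonneg m)]

/-- Coercivity of the difference of the temperature nonlinearity against the mean-free
part of the temperature difference: for `q ≥ 2` and nonnegative `θ₁, θ₂` bounded by `B`
in every `L^p`, `p ∈ [1,∞)`, one has
`⟨K(θ₁) - K(θ₂), θ - θ_Ω⟩ ≥ (1/2)‖θ - θ_Ω‖² - c θ_Ω²` with `c = c(q,B) > 0`. -/
theorem K_diff_coercive (q B : ℝ) (hq : 2 ≤ q) (hB : 0 < B) :
    ∃ c : ℝ, 0 < c ∧ ∀ θ₁ θ₂ : ℝ × ℝ → ℝ,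
      Continuous θ₁ → Continuous θ₂ → PerF θ₁ → PerF θ₂ →
      (∀ x, 0 ≤ θ₁ x) → (∀ x, 0 ≤ θ₂ x) →
      (∀ p : ℝ, 1 ≤ p → (∫ x in Qd, θ₁ x ^ p) ≤ B ^ p) →
      (∀ p : ℝ, 1 ≤ p → (∫ x in Qd, θ₂ x ^ p) ≤ B ^ p) →
      (∫ x in Qd, (Kfun q (θ₁ x) - Kfun q (θ₂ x)) *
          ((θ₁ x - θ₂ x) - meanQ (fun y => θ₁ y - θ₂ y))) ≥
        (1 / 2) * l2sqQ (fun x => (θ₁ x - θ₂ x) - meanQ (fun y => θ₁ y - θ₂ y)) -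
          c * (meanQ (fun y => θ₁ y - θ₂ y)) ^ 2 :=
  K_diff_coercive_general q B hq
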